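/- Decomposition of the context-dependent relation along concatenation: for any uncertainty map M and computation sequences η, ω, ω' (finite sequences of action symbols and tests ?φ with φ in star-free EPDL) with η = ωω', and for any finite sequence σ of action symbols, (s,t) ∈ →_{η_σ} if and only if (s,t) ∈ →_{ω_σ} ∘ →_{ω'_{σ r(ω)}}, where r(ω) is ω with all tests removed. -/

import Mathlib

mutual
/-- Formulas of the star-free fragment EPDL⁻. -/
inductive SFForm (P A : Type) : Type
  | top : SFForm P A
  | atom : P → SFForm P A
  | neg : SFForm P A → SFForm P A
  | and : SFForm P A → SFForm P A → SFForm P A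
  | box : SFProg P A → SFForm P A → SFForm P A
  | know : SFForm P A → SFForm P A
/-- Star-free programs. -/
inductive SFProg (P A : Type) : Type
  | act : A → SFProg P A
  | test : SFForm P A → SFProg P A
  | seq : SFProg P A → SFProg P A → SFProg P A
  | choice : SFProg P A → SFProg P A → SFProg P A
end

/-- A step of a computation sequence: an action or a test. -/
inductive SFStep (P A : Type) : Type
  | act : A → SFStep P A
  | test : SFForm P A → SFStep P A

mutual
def sizeF {P A : Type} : SFForm P A → ℕ
  | .top => 1
  | .atom _ => 1
  | .neg φ => sizeF φ + 1
  | .and φ ψ => sizeF φ + sizeF ψ + 1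
  | .box π φ => sizeP π + sizeF φ + 1
  | .know φ => sizeF φ + 1
def sizeP {P A : Type} : SFProg P A → ℕ
  | .act _ => 1
  | .test φ => sizeF φ + 1
  | .seq π π' => sizeP π + sizeP π' + 1
  | .choice π π' => sizeP π + sizeP π' + 1
end

def sizeStep {P A : Type} : SFStep P A → ℕ
  | .act _ => 1
  | .test φ => sizeF φ + 1

def sizeW {P A : Type} (ω : List (SFStep P A)) : ℕ := (ω.map sizeStep).sum

/-- L(π): the set of computation sequences of π. -/
def Lang {P A : Type} : SFProg P A → Set (List (SFStep P A))
  | .act a => {[SFStep.act a]}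
  | .test φ => {[SFStep.test φ]}
  | .seq π π' => {ω | ∃ u ∈ Lang π, ∃ v ∈ Lang π', ω = u ++ v}
  | .choice π π' => Lang π ∪ Lang π'

/-- r(ω): the sequence of actions obtained by deleting all tests from ω. -/
def rActs {P A : Type} (ω : List (SFStep P A)) : List A :=
  ω.filterMap fun st => match st with | .act a => some a | .test _ => none

theorem lang_size {P A : Type} : ∀ (π : SFProg P A) (ω : List (SFStep P A)),
    ω ∈ Lang π → sizeW ω ≤ sizeP π
  | .act a, ω, hω => by
      simp only [Lang, Set.mem_singleton_iff] at hω
      subst hω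
      simp [sizeW, sizeStep, sizeP]
  | .test φ, ω, hω => by
      simp only [Lang, Set.mem_singleton_iff] at hω
      subst hω
      simp [sizeW, sizeStep, sizeP]
  | .seq π π', ω, hω => by
      simp only [Lang, Set.mem_setOf_eq] at hω
      obtain ⟨u, hu, v, hv, rfl⟩ := hω
      have h1 := lang_size π u hu
      have h2 := lang_size π' v hv
      simp only [sizeW, List.map_append, List.sum_append] at *
      simp only [sizeP]
      omega
  | .choice π π', ω, hω => by
      simp only [Lang, Set.mem_union] at hω
      rcases hω with h | h
      · have := lang_size π ω h; simp only [sizeP]; omega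
      · have := lang_size π' ω h; simp only [sizeP]; omega

theorem sizeF_pos {P A : Type} (φ : SFForm P A) : 1 ≤ sizeF φ := by
  cases φ <;> simp [sizeF]

theorem sizeP_pos {P A : Type} (π : SFProg P A) : 1 ≤ sizeP π := by
  cases π <;> simp [sizeP]

/-- A Kripke model with labelled relations. -/
structure Kripke (P A : Type) where
  S : Type
  R : A → S → S → Prop
  V : S → P → Prop

namespace Kripke
variable {P A : Type}
/-- U|^a -/
def img (N : Kripke P A) (a : A) (U : Set N.S) : Set N.S := {t | ∃ u ∈ U, N.R a u t}
/-- Iterated update U|^σ along a sequence of actions. -/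
def updU (N : Kripke P A) : Set N.S → List A → Set N.S
  | U, [] => U
  | U, a :: σ => N.updU (N.img a U) σ
end Kripke

mutual
/-- Standard semantics of EPDL⁻ at a pointed uncertainty map (over a fixed
Kripke model `N`, given by an uncertainty set and a state). -/
def sfSat {P A : Type} (N : Kripke P A) : Set N.S → N.S → SFForm P A → Prop
  | _, _, .top => True
  | _, s, .atom p => N.V s p
  | U, s, .neg φ => ¬ sfSat N U s φ
  | U, s, .and φ ψ => sfSat N U s φ ∧ sfSat N U s ψ
  | U, s, .box π φ => ∀ c : Set N.S × N.S, sfRel N π (U, s) c → sfSat N c.1 c.2 φ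
  | U, _, .know φ => ∀ u ∈ U, sfSat N U u φ
/-- The relation ⟦π⟧ between pointed uncertainty maps. -/
def sfRel {P A : Type} (N : Kripke P A) : SFProg P A → Set N.S × N.S → Set N.S × N.S → Prop
  | .act a, c, c' => c'.1 = N.img a c.1 ∧ N.R a c.2 c'.2
  | .test ψ, c, c' => c' = c ∧ sfSat N c.1 c.2 ψ
  | .seq π₁ π₂, c, c' => ∃ d, sfRel N π₁ c d ∧ sfRel N π₂ d c'
  | .choice π₁ π₂, c, c' => sfRel N π₁ c c' ∨ sfRel N π₂ c c'
end

mutual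
/-- Context-dependent semantics M,s ⊩_σ φ: `U` is the initial uncertainty set of
the uncertainty map M, `σ` records the actions executed so far. -/
def cSat {P A : Type} (N : Kripke P A) (U : Set N.S) : List A → N.S → SFForm P A → Prop
  | _, _, .top => True
  | _, s, .atom p => N.V s p
  | σ, s, .neg φ => ¬ cSat N U σ s φ
  | σ, s, .and φ ψ => cSat N U σ s φ ∧ cSat N U σ s ψ
  | σ, _, .know φ => ∀ v ∈ N.updU U σ, cSat N U σ v φ
  | σ, s, .box π φ => ∀ ω : List (SFStep P A), ω ∈ Lang π →
      ∀ t : N.S, cRel N U ω σ s t → cSat N U (σ ++ rActs ω) t φ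
termination_by σ s φ => sizeF φ
decreasing_by
  · simp only [sizeF]; omega
  · simp only [sizeF]; omega
  · simp only [sizeF]; omega
  · simp only [sizeF]; omega
  · have h1 := lang_size π ω (by assumption)
    have h2 := sizeF_pos φ
    simp only [sizeF]; omega
  · have h2 := sizeP_pos π
    simp only [sizeF]; omega

/-- The context-dependent relation s →_{ω_σ} t. -/
def cRel {P A : Type} (N : Kripke P A) (U : Set N.S) : List (SFStep P A) → List A → N.S → N.S → Prop
  | [], _, s, t => s = t
  | .act a :: ω, σ, s, t => ∃ s', N.R a s s' ∧ cRel N U ω (σ ++ [a]) s' t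
  | .test φ :: ω, σ, s, t => cSat N U σ s φ ∧ cRel N U ω σ s t
termination_by ω σ s t => sizeW ω
decreasing_by
  · simp only [sizeW, sizeStep, List.map_cons, List.sum_cons]; omega
  · simp only [sizeW, sizeStep, List.map_cons, List.sum_cons]; omega
  · simp only [sizeW, sizeStep, List.map_cons, List.sum_cons]; omega
end

section
variable {P A : Type}

@[simp] theorem rActs_nil : rActs ([] : List (SFStep P A)) = [] := rfl

@[simp] theorem rActs_cons_act (a : A) (ω : List (SFStep P A)) :
    rActs (.act a :: ω) = a :: rActs ω := rfl

@[simp] theorem rActs_cons_test (φ : SFForm P A) (ω : List (SFStep P A)) :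
    rActs (.test φ :: ω) = rActs ω := rfl

variable (N : Kripke P A) (U : Set N.S)

@[simp] theorem cRel_nil (σ : List A) (s t : N.S) : cRel N U [] σ s t ↔ s = t := by
  rw [cRel]

@[simp] theorem cRel_cons_act (a : A) (ω : List (SFStep P A)) (σ : List A) (s t : N.S) :
    cRel N U (.act a :: ω) σ s t ↔ ∃ s', N.R a s s' ∧ cRel N U ω (σ ++ [a]) s' t := by
  rw [cRel]

@[simp] theorem cRel_cons_test (φ : SFForm P A) (ω : List (SFStep P A)) (σ : List A) (s t : N.S) :
    cRel N U (.test φ :: ω) σ s t ↔ cSat N U σ s φ ∧ cRel N U ω σ s t := by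
  rw [cRel]

theorem cRel_append_iff (ω ω' : List (SFStep P A)) (σ : List A) (s t : N.S) :
    cRel N U (ω ++ ω') σ s t ↔ ∃ u, cRel N U ω σ s u ∧ cRel N U ω' (σ ++ rActs ω) u t := by
  induction ω generalizing σ s with
  | nil => simp
  | cons step ω ih =>
    cases step with
    | act a =>
      simp only [List.cons_append, cRel_cons_act, ih, rActs_cons_act, List.append_assoc,
        List.nil_append, ← exists_and_left, ← exists_and_right, and_assoc]
      exact exists_comm
    | test φ =>
      simp only [List.cons_append, cRel_cons_test, ih, rActs_cons_test, exists_and_left,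
        and_assoc]

end

/-- Decomposition of the context-dependent relation along
concatenation: for any uncertainty map M (a Kripke model N with uncertainty set
U) and computation sequences η, ω, ω' with η = ωω', and any finite sequence σ of
action symbols, (s,t) ∈ →_{η_σ} iff (s,t) ∈ →_{ω_σ} ∘ →_{ω'_{σ r(ω)}}. -/
theorem cRel_append {P A : Type} [Countable P] [Countable A]
    (N : Kripke P A) (U : Set N.S) (hU : U.Nonempty)
    (η ω ω' : List (SFStep P A)) (hη : η = ω ++ ω') (σ : List A) (s t : N.S) :
    cRel N U η σ s t ↔ ∃ u : N.S, cRel N U ω σ s u ∧ cRel N U ω' (σ ++ rActs ω) u t :=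
  hη ▸ cRel_append_iff N U ω ω' σ s t
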